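/- Let (B,X,⊲,⊲',*) be a shadow biquandle such that X is strongly connected, and define [x,y,z] = y*((x↘z) ⊲' (x↘y)) for x,y,z∈X. Then for any y,z,w∈X there exists a unique x∈X such that [x,y,z] = w. -/

import Mathlib

/-- A biquandle: a set `B` with two binary operations `ut` (the under operation `⊲`)
and `ot` (the over operation `⊲'`) satisfying the biquandle axioms. -/
structure Biquandle (B : Type*) where
  ut : B → B → B
  ot : B → B → B
  diag : ∀ a, ut a a = ot a a
  ut_bij : ∀ b, Function.Bijective fun a => ut a b
  ot_bij : ∀ b, Function.Bijective fun a => ot a b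
  S_bij : Function.Bijective fun p : B × B => (ot p.2 p.1, ut p.1 p.2)
  ex1 : ∀ a b c, ut (ut a b) (ut c b) = ut (ut a c) (ot b c)
  ex2 : ∀ a b c, ot (ut a b) (ut c b) = ut (ot a c) (ot b c)
  ex3 : ∀ a b c, ot (ot a b) (ot c b) = ot (ot a c) (ut b c)

/-- The inverse `a ⊲⁻¹ b` of the bijection `·⊲b` of a biquandle. -/
noncomputable def Biquandle.utInv {B : Type*} (bq : Biquandle B) (a b : B) : B :=
  (Equiv.ofBijective _ (bq.ut_bij b)).symm a

/-- The inverse `a ⊲'⁻¹ b` of the bijection `·⊲'b` of a biquandle. -/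
noncomputable def Biquandle.otInv {B : Type*} (bq : Biquandle B) (a b : B) : B :=
  (Equiv.ofBijective _ (bq.ot_bij b)).symm a

/-- A `B`-set for a biquandle `bq` on `B`: a set `X` with an action `act = *`
such that each `·*a` is a bijection of `X` and `(x*a)*(b⊲'a) = (x*b)*(a⊲b)`. -/
structure BSet {B : Type*} (bq : Biquandle B) (X : Type*) where
  act : X → B → X
  act_bij : ∀ a, Function.Bijective fun x => act x a
  compat : ∀ x a b, act (act x a) (bq.ot b a) = act (act x b) (bq.ut a b)

/-- The inverse `x *⁻¹ a` of the bijection `·*a` of a `B`-set. -/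
noncomputable def BSet.actInv {B : Type*} {bq : Biquandle B} {X : Type*}
    (bs : BSet bq X) (x : X) (a : B) : X :=
  (Equiv.ofBijective _ (bs.act_bij a)).symm x

/-- A `B`-set is strongly connected if for each `x` the map `a ↦ x*a` is a bijection `B → X`. -/
def BSet.StronglyConnected {B : Type*} {bq : Biquandle B} {X : Type*} (bs : BSet bq X) : Prop :=
  ∀ x, Function.Bijective fun a => bs.act x a

/-- For a strongly connected `B`-set, `x ↘ y` is the unique `a ∈ B` with `x*a = y`. -/
noncomputable def BSet.sd {B : Type*} {bq : Biquandle B} {X : Type*} (bs : BSet bq X)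
    (h : bs.StronglyConnected) (x y : X) : B :=
  (Equiv.ofBijective _ (h x)).symm y

/-- The corresponding horizontal-tribracket of a shadow biquandle with strongly connected
`B`-set: `[x,y,z] = y*((x↘z) ⊲' (x↘y))`. -/
noncomputable def BSet.tribr {B X : Type*} {bq : Biquandle B} (bs : BSet bq X)
    (h : bs.StronglyConnected) (x y z : X) : X :=
  bs.act y (bq.ot (bs.sd h x z) (bs.sd h x y))

/-! By the `B`-set axiom, `[x,y,z]` equals both `y * ((x↘z) ⊲' (x↘y))` and
`z * ((x↘y) ⊲ (x↘z))`, so `[x,y,z] = w` says exactly that `S (x↘y, x↘z) = (y↘w, z↘w)`.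
As `S` is bijective and `x ↦ x↘y` is injective with `(y *⁻¹ a)↘y = a`, the unique solution is
`x = y *⁻¹ a` where `(a, b) = S⁻¹ (y↘w, z↘w)`. -/

namespace BSet

variable {B X : Type*} {bq : Biquandle B} (bs : BSet bq X)

theorem act_actInv (x : X) (a : B) : bs.act (bs.actInv x a) a = x :=
  (Equiv.ofBijective _ (bs.act_bij a)).apply_symm_apply x

theorem act_eq_of_act_ot_eq_act_ut {x y z : X} {a b : B} (hxa : bs.act x a = y)
    (hyz : bs.act y (bq.ot b a) = bs.act z (bq.ut a b)) : bs.act x b = z :=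
  (bs.act_bij (bq.ut a b)).1 <| by
    simp only [← bs.compat, hxa, hyz]

variable {bs} (h : bs.StronglyConnected)
include h

theorem act_sd (x y : X) : bs.act x (bs.sd h x y) = y :=
  (Equiv.ofBijective _ (h x)).apply_symm_apply y

theorem sd_eq_iff {x y : X} {a : B} : bs.sd h x y = a ↔ bs.act x a = y :=
  ⟨fun hxa => hxa ▸ bs.act_sd h x y,
    fun hxa => (h x).1 <| by simp only [act_sd, hxa]⟩

theorem sd_left_injective (y : X) : Function.Injective fun x => bs.sd h x y := by
  intro x x' (hxx' : bs.sd h x y = bs.sd h x' y)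
  refine (bs.act_bij (bs.sd h x y)).1 ?_
  change bs.act x (bs.sd h x y) = bs.act x' (bs.sd h x y)
  rw [act_sd, hxx', act_sd]

theorem sd_actInv (y : X) (a : B) : bs.sd h (bs.actInv y a) y = a :=
  (sd_eq_iff h).2 (bs.act_actInv y a)

theorem tribr_eq_act_ut (x y z : X) :
    bs.tribr h x y z = bs.act z (bq.ut (bs.sd h x y) (bs.sd h x z)) := by
  have hcompat := bs.compat x (bs.sd h x y) (bs.sd h x z)
  rwa [act_sd, act_sd] at hcompat

theorem tribr_eq_iff {x y z w : X} :
    bs.tribr h x y z = w ↔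
      (bq.ot (bs.sd h x z) (bs.sd h x y), bq.ut (bs.sd h x y) (bs.sd h x z)) =
        (bs.sd h y w, bs.sd h z w) := by
  have hy : bs.tribr h x y z = w ↔ bq.ot (bs.sd h x z) (bs.sd h x y) = bs.sd h y w :=
    (sd_eq_iff h).symm.trans eq_comm
  have hz : bs.tribr h x y z = w ↔ bq.ut (bs.sd h x y) (bs.sd h x z) = bs.sd h z w := by
    rw [tribr_eq_act_ut, eq_comm (b := bs.sd h z w), sd_eq_iff]
  rw [Prod.ext_iff]
  exact ⟨fun hw => ⟨hy.1 hw, hz.1 hw⟩, fun hw => hy.2 hw.1⟩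

end BSet

/-- Theorem 4.1, axiom (H1)(iii): for the corresponding tribracket
`[x,y,z] = y*((x↘z) ⊲' (x↘y))` of a shadow biquandle with strongly connected `X`,
for any `y z w ∈ X` there is a unique `x ∈ X` with `[x,y,z] = w`. -/
theorem shadow_biquandle_tribracket_H1iii {B X : Type*} (bq : Biquandle B)
    (bs : BSet bq X) (h : bs.StronglyConnected) :
    ∀ y z w : X, ∃! x : X, bs.tribr h x y z = w := by
  intro y z w
  set S := Equiv.ofBijective _ bq.S_bij
  obtain ⟨⟨a, b⟩, hS⟩ := S.surjective (bs.sd h y w, bs.sd h z w)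
  obtain ⟨hba, hab⟩ : bq.ot b a = bs.sd h y w ∧ bq.ut a b = bs.sd h z w := Prod.ext_iff.1 hS
  have hxb : bs.act (bs.actInv y a) b = z :=
    bs.act_eq_of_act_ot_eq_act_ut (bs.act_actInv y a) <| by
      rw [hba, hab, BSet.act_sd, BSet.act_sd]
  refine ⟨bs.actInv y a, ?_, fun x hx => ?_⟩
  · show bs.tribr h _ y z = w
    rw [BSet.tribr_eq_iff h, BSet.sd_actInv, (BSet.sd_eq_iff h).2 hxb]
    exact hS
  · have hx' : S (bs.sd h x y, bs.sd h x z) = S (a, b) :=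
      ((BSet.tribr_eq_iff h).1 hx).trans hS.symm
    exact BSet.sd_left_injective h y <|
      (congrArg Prod.fst (S.injective hx')).trans (BSet.sd_actInv h y a).symm
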